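/- arXiv:2510.18584 — 3 statements merged into one kernel-verified Lean document; each statement's English description precedes it below -/
import Mathlib

section
/- Let G be a 1-subdivided star with center a, middle vertices b_1, …, b_n and leaves c_1, …, c_n, with weight function w satisfying w(c_1) ≥ w(c_2) ≥ … ≥ w(c_n), and w(b_i) ≤ w(b_j) whenever i ≤ j and w(c_i) = w(c_j). Then there exists a treedepth decomposition T of G of minimum weighted depth such that every c_k is a ≤_T-maximal element and, for all i < j ≤ n, if b_i <_T a and b_j <_T a then b_i <_T b_j. -/
/-- A treedepth decomposition of a simple graph `G`: a partial order `le` on the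
vertices such that the set of elements below any vertex is linearly ordered, and
the endpoints of every edge are comparable. -/
structure TDDecomp {V : Type*} (G : SimpleGraph V) where
  le : V → V → Prop
  le_refl : ∀ x, le x x
  le_antisymm : ∀ x y, le x y → le y x → x = y
  le_trans : ∀ x y z, le x y → le y z → le x z
  down_linear : ∀ x y z, le y x → le z x → le y z ∨ le z y
  adj_comparable : ∀ u v, G.Adj u v → le u v ∨ le v u

/-- A chain of a treedepth decomposition: a finite set of pairwise comparable vertices. -/
def TDDecomp.IsChain {V : Type*} {G : SimpleGraph V} (T : TDDecomp G) (C : Finset V) : Prop :=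
  ∀ x ∈ C, ∀ y ∈ C, T.le x y ∨ T.le y x

/-- The weighted depth of a treedepth decomposition: the maximum over all chains `C`
of the total weight of `C`. -/
noncomputable def TDDecomp.weightedDepth {V : Type*} {G : SimpleGraph V}
    (T : TDDecomp G) (w : V → ℕ) : ℕ :=
  sSup {s | ∃ C : Finset V, T.IsChain C ∧ s = C.sum w}

/-- The weighted treedepth of `G` with weight function `w`: the minimum weighted depth
over all treedepth decompositions of `G`. -/
noncomputable def wtd {V : Type*} (G : SimpleGraph V) (w : V → ℕ) : ℕ :=
  sInf {s | ∃ T : TDDecomp G, s = T.weightedDepth w}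

/-- Vertices of a 1-subdivided star with `n` branches: the center `a`, the middle
vertices `b_1, …, b_n` and the leaves `c_1, …, c_n`. -/
inductive StarV (n : ℕ) where
  | center : StarV n
  | mid : Fin n → StarV n
  | leaf : Fin n → StarV n

/-- The 1-subdivided star: edges are exactly `a b_i` and `b_i c_i` for `1 ≤ i ≤ n`. -/
def subdivStar (n : ℕ) : SimpleGraph (StarV n) :=
  SimpleGraph.fromRel (fun x y =>
    (∃ i, x = StarV.center ∧ y = StarV.mid i) ∨
    (∃ i, x = StarV.mid i ∧ y = StarV.leaf i))

/-!
Start from an optimal decomposition `T₀` and let `S` be the set of `i` with `b_i ≤ a` in `T₀`.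
Rebuild it canonically: the `b_i` with `i ∈ S` form a path below `a` sorted by index, and every
`c_i` becomes maximal. The down-set of each vertex in the new decomposition is dominated in weight
by a chain of `T₀`. This is clear except for the down-set `{b_j : j ∈ S, j ≤ i} ∪ {c_i}` of `c_i`,
`i ∈ S`: those `b_j` lie below `a` in `T₀`, so they form a chain there with some top `b_k`, `k ≤ i`;
exchanging `c_i` for `c_k`, which is comparable with `b_k` and at least as heavy, gives the
dominating chain.
-/

namespace TDDecomp

variable {V : Type*} {G : SimpleGraph V} (T : TDDecomp G)

theorem isChain_of_forall_le {C : Finset V} {t : V} (h : ∀ x ∈ C, T.le x t) : T.IsChain C :=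
  fun x hx y hy => T.down_linear t x y (h x hx) (h y hy)

theorem isChain_of_forall_eq_or_le {C : Finset V} {t u : V} (htu : G.Adj t u)
    (h : ∀ x ∈ C, x = u ∨ T.le x t) : T.IsChain C := by
  rcases T.adj_comparable t u htu with htu | hut
  · refine T.isChain_of_forall_le (t := u) fun x hx => ?_
    rcases h x hx with rfl | hxt
    exacts [T.le_refl x, T.le_trans _ _ _ hxt htu]
  · exact T.isChain_of_forall_le fun x hx => (h x hx).elim (· ▸ hut) id

theorem IsChain.exists_top {T : TDDecomp G} {C : Finset V} (hC : T.IsChain C)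
    (hne : C.Nonempty) : ∃ t ∈ C, ∀ x ∈ C, T.le x t := by
  induction hne using Finset.Nonempty.cons_induction with
  | singleton a => exact ⟨a, by simp, by simp [T.le_refl]⟩
  | cons a s ha hs ih =>
    obtain ⟨t, hts, ht⟩ := ih fun x hx y hy => hC x (by simp [hx]) y (by simp [hy])
    rcases hC a (by simp) t (by simp [hts]) with hat | hta
    · exact ⟨t, by simp [hts], by simpa [hat] using ht⟩
    · exact ⟨a, by simp, by simpa [T.le_refl] using fun x hx => T.le_trans _ _ _ (ht x hx) hta⟩

variable [Fintype V] (w : V → ℕ)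

theorem sum_le_weightedDepth {C : Finset V} (hC : T.IsChain C) : C.sum w ≤ T.weightedDepth w :=
  le_csSup ⟨Finset.univ.sum w, by
    rintro _ ⟨D, -, rfl⟩
    exact Finset.sum_le_sum_of_subset (Finset.subset_univ D)⟩ ⟨C, hC, rfl⟩

open Classical in
noncomputable def downset (t : V) : Finset V := Finset.univ.filter (T.le · t)

theorem mem_downset {x t : V} : x ∈ T.downset t ↔ T.le x t := by
  simp [downset]

theorem self_mem_downset (t : V) : t ∈ T.downset t :=
  T.mem_downset.2 (T.le_refl t)

theorem downset_mono {s t : V} (hst : T.le s t) : T.downset s ⊆ T.downset t := by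
  intro x hx
  rw [mem_downset] at hx ⊢
  exact T.le_trans _ _ _ hx hst

theorem weightedDepth_le_of_downset {m : ℕ} (h : ∀ t, (T.downset t).sum w ≤ m) :
    T.weightedDepth w ≤ m := by
  refine csSup_le ⟨0, ∅, fun x hx => by simp at hx, by simp⟩ ?_
  rintro _ ⟨C, hC, rfl⟩
  rcases C.eq_empty_or_nonempty with rfl | hne
  · simp
  obtain ⟨t, -, ht⟩ := hC.exists_top hne
  exact (Finset.sum_le_sum_of_subset fun x hx => T.mem_downset.2 (ht x hx)).trans (h t)

end TDDecomp

theorem wtd_le_weightedDepth {V : Type*} {G : SimpleGraph V} (T : TDDecomp G) (w : V → ℕ) :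
    wtd G w ≤ T.weightedDepth w :=
  Nat.sInf_le ⟨T, rfl⟩

theorem exists_weightedDepth_eq_wtd {V : Type*} {G : SimpleGraph V} [Nonempty (TDDecomp G)]
    (w : V → ℕ) : ∃ T : TDDecomp G, T.weightedDepth w = wtd G w := by
  obtain ⟨T, hT⟩ := Nat.sInf_mem (s := {s | ∃ T : TDDecomp G, s = T.weightedDepth w})
    ⟨_, Classical.arbitrary _, rfl⟩
  exact ⟨T, hT.symm⟩

namespace StarV

variable {n : ℕ}

def equivSum (n : ℕ) : StarV n ≃ Unit ⊕ Fin n ⊕ Fin n where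
  toFun
    | center => .inl ()
    | mid i => .inr (.inl i)
    | leaf i => .inr (.inr i)
  invFun
    | .inl _ => center
    | .inr (.inl i) => mid i
    | .inr (.inr i) => leaf i
  left_inv x := by cases x <;> rfl
  right_inv x := by rcases x with _ | _ | _ <;> rfl

instance : Fintype (StarV n) := Fintype.ofEquiv _ (equivSum n).symm

theorem adj_center_mid (i : Fin n) : (subdivStar n).Adj center (mid i) :=
  ⟨nofun, .inl (.inl ⟨i, rfl, rfl⟩)⟩

theorem adj_mid_leaf (i : Fin n) : (subdivStar n).Adj (mid i) (leaf i) :=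
  ⟨nofun, .inl (.inr ⟨i, rfl, rfl⟩)⟩

/-- The middle vertices `b_i` with `i ∈ S` form a path in increasing index order below `a`,
each `c_i` with `i ∈ S` hangs from `b_i`, and every other branch `b_i c_i` hangs from `a`. -/
def canonLe (S : Finset (Fin n)) : StarV n → StarV n → Prop
  | center, center => True
  | center, mid j => j ∉ S
  | center, leaf j => j ∉ S
  | mid i, center => i ∈ S
  | mid i, mid j => i = j ∨ i ∈ S ∧ (j ∈ S → i < j)
  | mid i, leaf j => i = j ∨ i ∈ S ∧ (j ∈ S → i ≤ j)
  | leaf i, leaf j => i = j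
  | leaf _, center => False
  | leaf _, mid _ => False

def canonDecomp (S : Finset (Fin n)) : TDDecomp (subdivStar n) where
  le := canonLe S
  le_refl x := by cases x <;> simp [canonLe]
  le_antisymm x y := by cases x <;> cases y <;> simp only [canonLe] <;> grind
  le_trans x y z := by cases x <;> cases y <;> cases z <;> simp only [canonLe] <;> grind
  down_linear x y z := by cases x <;> cases y <;> cases z <;> simp only [canonLe] <;> grind
  adj_comparable := by
    rintro _ _ ⟨-, (⟨i, rfl, rfl⟩ | ⟨i, rfl, rfl⟩) | (⟨i, rfl, rfl⟩ | ⟨i, rfl, rfl⟩)⟩ <;>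
      simp only [canonLe] <;> grind

instance : Nonempty (TDDecomp (subdivStar n)) := ⟨canonDecomp ∅⟩

variable (T : TDDecomp (subdivStar n))

open Classical in
noncomputable def lowerMids : Finset (Fin n) :=
  Finset.univ.filter fun i => T.le (mid i) center

theorem mem_lowerMids {i : Fin n} : i ∈ lowerMids T ↔ T.le (mid i) center := by
  simp [lowerMids]

theorem center_le_mid_of_notMem {i : Fin n} (hi : i ∉ lowerMids T) : T.le center (mid i) :=
  (T.adj_comparable _ _ (adj_center_mid i)).resolve_right (mt (mem_lowerMids T).2 hi)

theorem le_center_of_canonLe {x : StarV n} (hx : canonLe (lowerMids T) x center) :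
    T.le x center := by
  cases x with
  | center => exact T.le_refl _
  | mid j => exact (mem_lowerMids T).1 hx
  | leaf j => exact hx.elim

theorem isChain_downset_center : T.IsChain ((canonDecomp (lowerMids T)).downset center) :=
  T.isChain_of_forall_le fun _ hx => le_center_of_canonLe T (TDDecomp.mem_downset _ |>.1 hx)

theorem isChain_downset_leaf {i : Fin n} (hi : i ∉ lowerMids T) :
    T.IsChain ((canonDecomp (lowerMids T)).downset (leaf i)) := by
  refine T.isChain_of_forall_eq_or_le (adj_mid_leaf i) fun x hx => ?_
  replace hx : canonLe (lowerMids T) x (leaf i) := TDDecomp.mem_downset _ |>.1 hx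
  have hci := center_le_mid_of_notMem T hi
  cases x with
  | center => exact .inr hci
  | mid j =>
    rcases hx with rfl | ⟨hj, -⟩
    · exact .inr (T.le_refl _)
    · exact .inr (T.le_trans _ _ _ ((mem_lowerMids T).1 hj) hci)
  | leaf j => exact .inl (congrArg leaf hx)

theorem exists_isChain_sum_downset_leaf_le {w : StarV n → ℕ} (hc : Antitone (w ∘ leaf))
    {i : Fin n} (hi : i ∈ lowerMids T) : ∃ D : Finset (StarV n),
      T.IsChain D ∧ ((canonDecomp (lowerMids T)).downset (leaf i)).sum w ≤ D.sum w := by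
  classical
  set P := ((canonDecomp (lowerMids T)).downset (leaf i)).erase (leaf i)
  have hP : ∀ x ∈ P, ∃ j ≤ i, x = mid j ∧ j ∈ lowerMids T := by
    intro x hx
    obtain ⟨hxi, hx⟩ := Finset.mem_erase.1 hx
    replace hx : canonLe (lowerMids T) x (leaf i) := TDDecomp.mem_downset _ |>.1 hx
    cases x with
    | center => exact absurd hi hx
    | mid j =>
      rcases hx with rfl | ⟨hj, hji⟩
      exacts [⟨j, le_rfl, rfl, hi⟩, ⟨j, hji hi, rfl, hj⟩]
    | leaf j => exact absurd (congrArg leaf hx) hxi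
  have hPchain : T.IsChain P := T.isChain_of_forall_le (t := center) fun x hx => by
    obtain ⟨j, -, rfl, hj⟩ := hP x hx
    exact (mem_lowerMids T).1 hj
  have hmid : mid i ∈ P := by
    simp only [P, Finset.mem_erase, TDDecomp.mem_downset]
    exact ⟨nofun, .inl rfl⟩
  obtain ⟨_, htop, ht⟩ := hPchain.exists_top ⟨_, hmid⟩
  obtain ⟨k, hki, rfl, -⟩ := hP _ htop
  have hk : leaf k ∉ P := fun h => by obtain ⟨_, _, h, _⟩ := hP _ h; cases h
  refine ⟨insert (leaf k) P, T.isChain_of_forall_eq_or_le (adj_mid_leaf k) fun x hx => ?_, ?_⟩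
  · exact (Finset.mem_insert.1 hx).imp id (ht x)
  · rw [Finset.sum_insert hk, ← Finset.add_sum_erase _ _ (TDDecomp.self_mem_downset _ _)]
    exact Nat.add_le_add_right (hc hki) _

theorem weightedDepth_canonDecomp_le {w : StarV n → ℕ} (hc : Antitone (w ∘ leaf)) :
    (canonDecomp (lowerMids T)).weightedDepth w ≤ T.weightedDepth w := by
  set T' := canonDecomp (lowerMids T)
  have hleaf (i : Fin n) : (T'.downset (leaf i)).sum w ≤ T.weightedDepth w := by
    by_cases hi : i ∈ lowerMids T
    · obtain ⟨D, hD, hsum⟩ := exists_isChain_sum_downset_leaf_le T hc hi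
      exact hsum.trans (T.sum_le_weightedDepth w hD)
    · exact T.sum_le_weightedDepth w (isChain_downset_leaf T hi)
  refine T'.weightedDepth_le_of_downset w fun t => ?_
  cases t with
  | center => exact T.sum_le_weightedDepth w (isChain_downset_center T)
  | mid i =>
    have hsub : T'.downset (mid i) ⊆ T'.downset (leaf i) := T'.downset_mono (.inl rfl)
    exact (Finset.sum_le_sum_of_subset hsub).trans (hleaf i)
  | leaf i => exact hleaf i

end StarV

theorem stmt7_general (n : ℕ) (w : StarV n → ℕ)
    (hc : ∀ i j : Fin n, i ≤ j → w (StarV.leaf j) ≤ w (StarV.leaf i)) :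
    ∃ T : TDDecomp (subdivStar n),
      T.weightedDepth w = wtd (subdivStar n) w ∧
      (∀ k : Fin n, ∀ x, T.le (StarV.leaf k) x → x = StarV.leaf k) ∧
      (∀ i j : Fin n, i < j →
        (T.le (StarV.mid i) StarV.center ∧ StarV.mid i ≠ StarV.center) →
        (T.le (StarV.mid j) StarV.center ∧ StarV.mid j ≠ StarV.center) →
        T.le (StarV.mid i) (StarV.mid j) ∧ StarV.mid i ≠ StarV.mid j) := by
  obtain ⟨T₀, hT₀⟩ := exists_weightedDepth_eq_wtd (G := subdivStar n) w
  refine ⟨StarV.canonDecomp (StarV.lowerMids T₀), ?_, ?_, ?_⟩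
  · exact le_antisymm (hT₀ ▸ StarV.weightedDepth_canonDecomp_le T₀ hc) (wtd_le_weightedDepth _ w)
  · rintro k (_ | _ | j) h
    exacts [h.elim, h.elim, congrArg StarV.leaf h.symm]
  · rintro i j hij ⟨hi, -⟩ ⟨hj, -⟩
    exact ⟨.inr ⟨hi, fun _ => hij⟩, fun h => hij.ne (StarV.mid.inj h)⟩

/-- Suppose the leaves are ordered by decreasing weight and, among equal
leaf weights, the middle vertices by increasing weight. Then there is an optimal
treedepth decomposition `T` in which every `c_k` is `≤_T`-maximal and, whenever
`i < j` and both `b_i <_T a` and `b_j <_T a`, we have `b_i <_T b_j`. -/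
theorem stmt7 (n : ℕ) (w : StarV n → ℕ) (hw : ∀ v, 0 < w v)
    (hc : ∀ i j : Fin n, i ≤ j → w (StarV.leaf j) ≤ w (StarV.leaf i))
    (hb : ∀ i j : Fin n, i ≤ j → w (StarV.leaf i) = w (StarV.leaf j) →
      w (StarV.mid i) ≤ w (StarV.mid j)) :
    ∃ T : TDDecomp (subdivStar n),
      T.weightedDepth w = wtd (subdivStar n) w ∧
      (∀ k : Fin n, ∀ x, T.le (StarV.leaf k) x → x = StarV.leaf k) ∧
      (∀ i j : Fin n, i < j →
        (T.le (StarV.mid i) StarV.center ∧ StarV.mid i ≠ StarV.center) →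
        (T.le (StarV.mid j) StarV.center ∧ StarV.mid j ≠ StarV.center) →
        T.le (StarV.mid i) (StarV.mid j) ∧ StarV.mid i ≠ StarV.mid j) :=
  stmt7_general n w hc
end

section
/- Let G be a finite simple graph in which every vertex has degree exactly 3, with n = |V(G)| = 2^m for some m ≥ 1, let k be an integer with 1 < k < n−1, and let G' (with weights, β, α and k' as specified) be the associated gadget graph. Let H be the subgraph of G' induced by V(T_1) ∪ D, where D ⊆ {v_1 : v ∈ V(G)} ∪ {v_{g1} : v ∈ V(G)}; the vertices of D are called dangling. If no two dangling vertices are adjacent in G', then wtd(H) = α + w*, where w* is the maximum weight of a dangling vertex (w* = 0 if D is empty). -/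
/-- Vertices of the gadget graph `G'` built from a cubic graph `G` on `2^m` vertices:
`copy v i` is `v_{i+1}` (the two copies `v_1, v_2` of `v`), `guard v i` is `v_{g(i+1)}`
(the three vertices `v_{g1}, v_{g2}, v_{g3}`), and `tree t i j` is the `j`-th vertex at
depth `i` of the complete binary tree `T_{t+1}` (depth `m` vertices are the `2^m` leaves). -/
inductive GadgetV (V : Type*) (m : ℕ) where
  | copy : V → Fin 2 → GadgetV V m
  | guard : V → Fin 3 → GadgetV V m
  | tree : Fin 3 → (i : Fin (m + 1)) → Fin (2 ^ i.val) → GadgetV V m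

/-- The base relation generating the edges of `G'` (for `e : V ≃ Fin (2^m)` the
identification of `V(G)` with the leaves of each tree):
copies of adjacent vertices are adjacent (`u_1v_1, u_2v_2, u_1v_2, u_2v_1`);
each `v_{gi}` is adjacent to `v_1` and `v_2`; consecutive levels of each complete
binary tree `T_t` are joined (child `j'` at depth `i+1` to parent `j'/2` at depth `i`);
and `v_1, v_{g1}` are joined to the leaf `v_{t_1}` of `T_1`, `v_2, v_{g2}` to the leaf
`v_{t_2}` of `T_2`, and `v_{g3}` to the leaf `v_{t_3}` of `T_3`. -/
def gadgetRel {V : Type*} {m : ℕ} (G : SimpleGraph V) (e : V ≃ Fin (2 ^ m)) :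
    GadgetV V m → GadgetV V m → Prop
  | .copy u _, .copy v _ => G.Adj u v
  | .copy u _, .guard v _ => u = v
  | .copy u i, .tree t d j => (t : ℕ) = (i : ℕ) ∧ (d : ℕ) = m ∧ (j : ℕ) = (e u : ℕ)
  | .guard u i, .tree t d j => (t : ℕ) = (i : ℕ) ∧ (d : ℕ) = m ∧ (j : ℕ) = (e u : ℕ)
  | .tree t d j, .tree t' d' j' => t = t' ∧ (d : ℕ) + 1 = (d' : ℕ) ∧ (j' : ℕ) / 2 = (j : ℕ)
  | _, _ => False

/-- The gadget graph `G'`. -/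
def gadget {V : Type*} {m : ℕ} (G : SimpleGraph V) (e : V ≃ Fin (2 ^ m)) :
    SimpleGraph (GadgetV V m) :=
  SimpleGraph.fromRel (gadgetRel G e)

/-- The weight function of `G'` (with parameter `β`): copies `v_1, v_2` have weight `2`,
the `v_{gi}` have weight `1`, and a tree vertex at depth `i` has weight `β + 3i`. -/
def gadgetW {V : Type*} {m : ℕ} (β : ℕ) : GadgetV V m → ℕ
  | .copy _ _ => 2
  | .guard _ _ => 1
  | .tree _ i _ => β + 3 * (i : ℕ)

/-!
Both bounds come from placing the vertices of `H` in the infinite binary tree on `ℕ × ℕ`: a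
vertex of `T_1` keeps its position, and a dangling vertex of `v` becomes a child of the leaf of
`v`. Since no two dangling vertices are adjacent, this placement is injective on `H`.

Upper bound: the ancestor order of the binary tree pulls back to a decomposition of `H`; a chain
of it meets each depth at most once, so its weight is at most `α + w*`.

Lower bound: in any decomposition, the subtree of `T_1` below a node is connected, hence has a
least element `x`, at least as deep as the node. The subtree of one of the two children misses `x`,
and by induction it holds a chain of weight at least that of a path from the child down to a leaf;
that chain lies above `x`. To collect the heaviest dangling vertex `d` too, descend towards `d`
whenever `x` is off that branch; when `x` is on it, `x` is one level deeper than the node and its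
extra weight `3 ≥ w(d)` pays for `d`.
-/

namespace TDDecomp

variable {V : Type*} {G : SimpleGraph V} (T : TDDecomp G)

def comap {W : Type*} {Γ : SimpleGraph W} (T : TDDecomp Γ) (f : V → W)
    (hf : Function.Injective f) (hG : ∀ u v, G.Adj u v → T.le (f u) (f v) ∨ T.le (f v) (f u)) :
    TDDecomp G where
  le u v := T.le (f u) (f v)
  le_refl _ := T.le_refl _
  le_antisymm _ _ huv hvu := hf (T.le_antisymm _ _ huv hvu)
  le_trans _ _ _ := T.le_trans _ _ _
  down_linear _ _ _ := T.down_linear _ _ _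
  adj_comparable := hG

def HasLeast (S : Set V) : Prop :=
  ∃ x ∈ S, ∀ y ∈ S, T.le x y

lemma hasLeast_singleton (x : V) : T.HasLeast {x} :=
  ⟨x, rfl, fun _ hy => hy ▸ T.le_refl x⟩

variable {T}

lemma HasLeast.union_of_le {A B : Set V} (hA : T.HasLeast A) (hB : T.HasLeast B) {a b : V}
    (ha : a ∈ A) (hb : b ∈ B) (hab : T.le a b) : T.HasLeast (A ∪ B) := by
  obtain ⟨x, hxA, hx⟩ := hA
  obtain ⟨y, hyB, hy⟩ := hB
  rcases T.down_linear b x y (T.le_trans _ _ _ (hx a ha) hab) (hy b hb) with hxy | hyx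
  · refine ⟨x, .inl hxA, ?_⟩
    rintro z (hz | hz)
    exacts [hx z hz, T.le_trans _ _ _ hxy (hy z hz)]
  · refine ⟨y, .inr hyB, ?_⟩
    rintro z (hz | hz)
    exacts [T.le_trans _ _ _ hyx (hx z hz), hy z hz]

lemma HasLeast.union {A B : Set V} (hA : T.HasLeast A) (hB : T.HasLeast B) {a b : V}
    (ha : a ∈ A) (hb : b ∈ B) (hab : G.Adj a b) : T.HasLeast (A ∪ B) := by
  rcases T.adj_comparable a b hab with h | h
  · exact hA.union_of_le hB ha hb h
  · rw [Set.union_comm]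
    exact hB.union_of_le hA hb ha h

variable (T)

def HasHeavyChain (S : Set V) (w : V → ℕ) (b : ℕ) : Prop :=
  ∃ C : Finset V, ↑C ⊆ S ∧ T.IsChain C ∧ b ≤ C.sum w

variable {T}

lemma hasHeavyChain_zero (S : Set V) (w : V → ℕ) : T.HasHeavyChain S w 0 :=
  ⟨∅, by simp, by simp [IsChain], by simp⟩

lemma HasHeavyChain.mono {S S' : Set V} {w : V → ℕ} {b b' : ℕ} (h : T.HasHeavyChain S w b)
    (hS : S ⊆ S') (hb : b' ≤ b) : T.HasHeavyChain S' w b' :=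
  let ⟨C, hCS, hC, hCb⟩ := h
  ⟨C, hCS.trans hS, hC, hb.trans hCb⟩

lemma HasHeavyChain.insert_least {S S' : Set V} {w : V → ℕ} {b : ℕ} {x : V}
    (h : T.HasHeavyChain S' w b) (hx : x ∈ S) (hleast : ∀ y ∈ S, T.le x y) (hS' : S' ⊆ S)
    (hxS' : x ∉ S') : T.HasHeavyChain S w (w x + b) := by
  classical
  obtain ⟨C, hCS', hC, hCb⟩ := h
  have hxC : x ∉ C := fun h => hxS' (hCS' h)
  refine ⟨insert x C, ?_, ?_, by simpa [Finset.sum_insert hxC] using hCb⟩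
  · simpa [Set.insert_subset_iff] using ⟨hx, hCS'.trans hS'⟩
  · have hle : ∀ y ∈ C, T.le x y := fun y hy => hleast y (hS' (hCS' hy))
    simp only [IsChain, Finset.mem_insert]
    rintro y (rfl | hy) z (rfl | hz)
    exacts [.inl (T.le_refl _), .inl (hle z hz), .inr (hle y hy), hC y hy z hz]

lemma HasHeavyChain.le_weightedDepth [Finite V] {S : Set V} {w : V → ℕ} {b : ℕ}
    (h : T.HasHeavyChain S w b) : b ≤ T.weightedDepth w := by
  have := Fintype.ofFinite V
  obtain ⟨C, -, hC, hCb⟩ := h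
  refine hCb.trans (le_csSup ⟨Finset.univ.sum w, ?_⟩ ⟨C, hC, rfl⟩)
  rintro _ ⟨C', -, rfl⟩
  exact Finset.sum_le_sum_of_subset (Finset.subset_univ C')

lemma weightedDepth_le {w : V → ℕ} {b : ℕ} (h : ∀ C, T.IsChain C → C.sum w ≤ b) :
    T.weightedDepth w ≤ b :=
  csSup_le ⟨0, ∅, by simp [IsChain], by simp⟩ (by rintro _ ⟨C, hC, rfl⟩; exact h C hC)

end TDDecomp

lemma wtd_eq_of_le {V : Type*} {G : SimpleGraph V} {w : V → ℕ} {b : ℕ} (T₀ : TDDecomp G)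
    (h₀ : T₀.weightedDepth w ≤ b) (h : ∀ T : TDDecomp G, b ≤ T.weightedDepth w) : wtd G w = b :=
  le_antisymm
    ((Nat.sInf_le (s := {s | ∃ T : TDDecomp G, s = T.weightedDepth w}) ⟨T₀, rfl⟩).trans h₀)
    (le_csInf ⟨_, T₀, rfl⟩ (by rintro _ ⟨T, rfl⟩; exact h T))

namespace BinTree

/-- `Anc p q`: in the infinite binary tree on `ℕ × ℕ`, where the node `(i, j)` has the children
`(i + 1, 2 * j)` and `(i + 1, 2 * j + 1)`, the node `p` is an ancestor of `q`. -/
def Anc (p q : ℕ × ℕ) : Prop :=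
  p.1 ≤ q.1 ∧ q.2 / 2 ^ (q.1 - p.1) = p.2

lemma div_two_pow_div_two_pow (a k l : ℕ) : a / 2 ^ k / 2 ^ l = a / 2 ^ (k + l) := by
  rw [Nat.div_div_eq_div_mul, pow_add]

lemma anc_refl (p : ℕ × ℕ) : Anc p p :=
  ⟨le_rfl, by simp⟩

lemma anc_of_anc_of_fst_le {p q r : ℕ × ℕ} (hpr : Anc p r) (hqr : Anc q r) (h : p.1 ≤ q.1) :
    Anc p q := by
  refine ⟨h, ?_⟩
  rw [← hqr.2, div_two_pow_div_two_pow, ← hpr.2]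
  congr 2
  have := hqr.1
  omega

lemma Anc.trans {p q r : ℕ × ℕ} (hpq : Anc p q) (hqr : Anc q r) : Anc p r := by
  refine ⟨hpq.1.trans hqr.1, ?_⟩
  rw [← hpq.2, ← hqr.2, div_two_pow_div_two_pow]
  congr 2
  have := hpq.1
  have := hqr.1
  omega

lemma Anc.eq_of_fst_eq {p q : ℕ × ℕ} (h : Anc p q) (hfst : p.1 = q.1) : p = q :=
  Prod.ext hfst (by simpa [hfst] using h.2.symm)

lemma Anc.antisymm {p q : ℕ × ℕ} (hpq : Anc p q) (hqp : Anc q p) : p = q :=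
  hpq.eq_of_fst_eq (le_antisymm hpq.1 hqp.1)

lemma anc_or_anc_of_anc {p q r : ℕ × ℕ} (hpr : Anc p r) (hqr : Anc q r) :
    Anc p q ∨ Anc q p :=
  (le_total p.1 q.1).imp (anc_of_anc_of_fst_le hpr hqr) (anc_of_anc_of_fst_le hqr hpr)

def order : TDDecomp (⊥ : SimpleGraph (ℕ × ℕ)) where
  le := Anc
  le_refl := anc_refl
  le_antisymm _ _ := Anc.antisymm
  le_trans _ _ _ := Anc.trans
  down_linear _ _ _ := anc_or_anc_of_anc
  adj_comparable _ _ h := h.elim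

lemma anc_child (p : ℕ × ℕ) {b : ℕ} (hb : b < 2) : Anc p (p.1 + 1, 2 * p.2 + b) :=
  ⟨by simp, by simp; omega⟩

lemma anc_parent (i : ℕ) {j j' : ℕ} (h : j' / 2 = j) : Anc (i, j) (i + 1, j') :=
  ⟨by simp, by simpa using h⟩

lemma lt_two_pow_child {p : ℕ × ℕ} (hp : p.2 < 2 ^ p.1) {b : ℕ} (hb : b < 2) :
    2 * p.2 + b < 2 ^ (p.1 + 1) := by
  rw [pow_succ]
  omega

lemma root_anc {q : ℕ × ℕ} (hq : q.2 < 2 ^ q.1) : Anc (0, 0) q :=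
  ⟨Nat.zero_le _, by simpa using Nat.div_eq_of_lt hq⟩

lemma Anc.snd_lt_two_pow {p q : ℕ × ℕ} (h : Anc p q) (hq : q.2 < 2 ^ q.1) : p.2 < 2 ^ p.1 := by
  rw [← h.2, Nat.div_lt_iff_lt_mul (by positivity), ← pow_add, Nat.add_sub_cancel' h.1]
  exact hq

lemma eq_or_anc_child_of_anc {p q : ℕ × ℕ} (h : Anc p q) :
    q = p ∨ ∃ b < 2, Anc (p.1 + 1, 2 * p.2 + b) q := by
  rcases h.1.eq_or_lt with hfst | hlt
  · exact .inl (h.eq_of_fst_eq hfst).symm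
  · -- the ancestor of `q` at depth `p.1 + 1` is a child of `p`
    have hc : Anc (p.1 + 1, q.2 / 2 ^ (q.1 - (p.1 + 1))) q := ⟨hlt, rfl⟩
    have hpc := anc_of_anc_of_fst_le h hc (by simp)
    refine .inr ⟨q.2 / 2 ^ (q.1 - (p.1 + 1)) % 2, Nat.mod_lt _ two_pos, ?_⟩
    convert hc using 2
    have := hpc.2
    simp only [add_tsub_cancel_left, pow_one] at this
    omega

lemma exists_child_not_anc (p q : ℕ × ℕ) : ∃ b < 2, ¬ Anc (p.1 + 1, 2 * p.2 + b) q := by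
  by_contra! h
  have := (anc_of_anc_of_fst_le (h 0 two_pos) (h 1 one_lt_two) le_rfl).eq_of_fst_eq rfl
  simp at this

end BinTree

namespace Gadget

open BinTree

variable {V : Type*} {m : ℕ}

instance [Finite V] : Finite (GadgetV V m) := by
  let f : GadgetV V m → (V × Fin 2) ⊕ (V × Fin 3) ⊕ (Fin 3 × Σ i : Fin (m + 1), Fin (2 ^ i.val))
    | .copy v i => .inl (v, i)
    | .guard v i => .inr (.inl (v, i))
    | .tree t i j => .inr (.inr (t, ⟨i, j⟩))
  refine Finite.of_injective f ?_
  rintro (_ | _ | _) (_ | _ | _) h <;> simp_all [f]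

/-- The position of a vertex of `G'` in the binary tree `ℕ × ℕ`: tree vertices keep their
(depth, index), while `v_i` and `v_{gi}` hang at depth `m + 1` below the leaf `e v`. -/
def key (e : V ≃ Fin (2 ^ m)) : GadgetV V m → ℕ × ℕ
  | .copy v _ => (m + 1, 2 * (e v : ℕ))
  | .guard v _ => (m + 1, 2 * (e v : ℕ))
  | .tree _ i j => (i, j)

def treeSet : Set (GadgetV V m) :=
  {x | ∃ (i : Fin (m + 1)) (j : Fin (2 ^ i.val)), x = GadgetV.tree 0 i j}

variable (e : V ≃ Fin (2 ^ m))

lemma key_fst_le_succ (x : GadgetV V m) : (key e x).1 ≤ m + 1 := by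
  cases x with
  | tree _ i _ => exact i.isLt.le
  | _ => exact le_rfl

lemma gadgetW_of_key_fst_le (β : ℕ) {x : GadgetV V m} (h : (key e x).1 ≤ m) :
    gadgetW β x = β + 3 * (key e x).1 := by
  cases x <;> simp_all [key, gadgetW]

lemma key_fst_le_of_mem_treeSet {x : GadgetV V m} (hx : x ∈ treeSet) : (key e x).1 ≤ m := by
  obtain ⟨i, j, rfl⟩ := hx
  exact Nat.le_of_lt_succ i.isLt

lemma key_of_pendant {x : GadgetV V m} {v : V} (hv : x = .copy v 0 ∨ x = .guard v 0) :
    key e x = (m + 1, 2 * (e v : ℕ)) := by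
  rcases hv with rfl | rfl <;> rfl

lemma gadgetW_of_pendant (β : ℕ) {x : GadgetV V m} {v : V}
    (hv : x = .copy v 0 ∨ x = .guard v 0) : gadgetW β x ≤ 2 := by
  rcases hv with rfl | rfl <;> simp [gadgetW]

variable (G : SimpleGraph V)

lemma anc_key_of_gadgetRel {x y : GadgetV V m} (h : gadgetRel G e x y)
    (hxy : (key e x).1 ≤ m ∨ (key e y).1 ≤ m) :
    Anc (key e x) (key e y) ∨ Anc (key e y) (key e x) := by
  rcases x with ⟨u, _⟩ | ⟨u, _⟩ | ⟨_, i, j⟩ <;> rcases y with ⟨_, _⟩ | ⟨_, _⟩ | ⟨_, i', j'⟩ <;>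
    simp only [gadgetRel, key] at h hxy ⊢
  any_goals omega
  all_goals
    obtain ⟨-, hi, hj⟩ := h
    -- the type of `j'` depends on `i'`, so `i'` can only be rewritten once `j'` is a plain number
    generalize (j' : ℕ) = b at hj ⊢
    generalize (i' : ℕ) = a at hi ⊢
    subst hi
    first
      | exact .inl (anc_parent _ hj)
      | exact .inr (anc_parent _ (by omega))

variable {D : Set (GadgetV V m)}

lemma key_injective (hD : D ⊆ {x | ∃ v : V, x = GadgetV.copy v 0 ∨ x = GadgetV.guard v 0})
    (hind : ∀ x ∈ D, ∀ y ∈ D, ¬ (gadget G e).Adj x y) :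
    Function.Injective (fun x : ↥(treeSet ∪ D) => key e x.1) := by
  rintro ⟨x, hx | hx⟩ ⟨y, hy | hy⟩ hxy <;> simp only at hxy <;> apply Subtype.ext
  · obtain ⟨i, j, rfl⟩ := hx
    obtain ⟨i', j', rfl⟩ := hy
    simp only [key, Prod.mk.injEq] at hxy
    obtain rfl : i = i' := Fin.ext hxy.1
    rw [Fin.ext hxy.2]
  · obtain ⟨v, hv⟩ := hD hy
    have := key_fst_le_of_mem_treeSet e hx
    simp [hxy, key_of_pendant e hv] at this
  · obtain ⟨v, hv⟩ := hD hx
    have := key_fst_le_of_mem_treeSet e hy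
    simp [← hxy, key_of_pendant e hv] at this
  · obtain ⟨v, hv⟩ := hD hx
    obtain ⟨v', hv'⟩ := hD hy
    rw [key_of_pendant e hv, key_of_pendant e hv'] at hxy
    obtain rfl : v = v' := e.injective (Fin.ext (by simpa using hxy))
    have hadj : (gadget G e).Adj (.copy v 0) (.guard v 0) :=
      (SimpleGraph.fromRel_adj _ _ _).2 ⟨by simp, .inl rfl⟩
    rcases hv with rfl | rfl <;> rcases hv' with rfl | rfl
    exacts [rfl, (hind _ hx _ hy hadj).elim, (hind _ hy _ hx hadj).elim, rfl]

lemma anc_key_of_adj (hind : ∀ x ∈ D, ∀ y ∈ D, ¬ (gadget G e).Adj x y) {x y : ↥(treeSet ∪ D)}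
    (h : ((gadget G e).induce (treeSet ∪ D)).Adj x y) :
    Anc (key e x.1) (key e y.1) ∨ Anc (key e y.1) (key e x.1) := by
  rw [SimpleGraph.induce_adj] at h
  have hxy : (key e x.1).1 ≤ m ∨ (key e y.1).1 ≤ m := by
    rcases x.2 with hx | hx
    · exact .inl (key_fst_le_of_mem_treeSet e hx)
    rcases y.2 with hy | hy
    · exact .inr (key_fst_le_of_mem_treeSet e hy)
    exact (hind _ hx _ hy h).elim
  rcases ((SimpleGraph.fromRel_adj _ _ _).1 h).2 with hr | hr
  · exact anc_key_of_gadgetRel e G hr hxy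
  · exact (anc_key_of_gadgetRel e G hr hxy.symm).symm

variable (hD : D ⊆ {x | ∃ v : V, x = GadgetV.copy v 0 ∨ x = GadgetV.guard v 0})
  (hind : ∀ x ∈ D, ∀ y ∈ D, ¬ (gadget G e).Adj x y)

def treeOrder : TDDecomp ((gadget G e).induce (treeSet ∪ D)) :=
  BinTree.order.comap (fun x => key e x.1) (key_injective e G hD hind)
    (fun _ _ => anc_key_of_adj e G hind)

lemma weightedDepth_treeOrder_le [Finite V] (β : ℕ) :
    (treeOrder e G hD hind).weightedDepth (fun x => gadgetW β x.1) ≤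
      ∑ i ∈ Finset.range (m + 1), (β + 3 * i) + sSup (gadgetW β '' D) := by
  classical
  -- a chain meets every depth at most once, and the dangling vertices all sit at depth `m + 1`
  let g : ℕ → ℕ := fun l => if l ≤ m then β + 3 * l else sSup (gadgetW β '' D)
  have hwg (x : ↥(treeSet ∪ D)) : gadgetW β x.1 ≤ g (key e x.1).1 := by
    by_cases hx : (key e x.1).1 ≤ m
    · simp [g, hx, gadgetW_of_key_fst_le e β hx]
    · have hxD : x.1 ∈ D := x.2.resolve_left fun h => hx (key_fst_le_of_mem_treeSet e h)
      simpa [g, hx] using le_csSup (D.toFinite.image _).bddAbove ⟨x.1, hxD, rfl⟩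
  have hg : ∑ l ∈ Finset.range (m + 2), g l =
      ∑ i ∈ Finset.range (m + 1), (β + 3 * i) + sSup (gadgetW β '' D) := by
    rw [Finset.sum_range_succ]
    congr 1
    · exact Finset.sum_congr rfl fun i hi => if_pos (Nat.le_of_lt_succ (Finset.mem_range.1 hi))
    · simp [g]
  refine TDDecomp.weightedDepth_le fun C hC => ?_
  have hinj : Set.InjOn (fun x : ↥(treeSet ∪ D) => (key e x.1).1) C := fun x hx y hy hxy =>
    key_injective e G hD hind <| (hC x hx y hy).elim (·.eq_of_fst_eq hxy)
      (fun h => (h.eq_of_fst_eq hxy.symm).symm)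
  calc C.sum (fun x => gadgetW β x.1)
      ≤ ∑ x ∈ C, g (key e x.1).1 := Finset.sum_le_sum fun x _ => hwg x
    _ = ∑ l ∈ C.image (fun x => (key e x.1).1), g l := (Finset.sum_image hinj).symm
    _ ≤ ∑ l ∈ Finset.range (m + 2), g l := by
        refine Finset.sum_le_sum_of_subset fun l hl => ?_
        obtain ⟨x, -, rfl⟩ := Finset.mem_image.1 hl
        exact Finset.mem_range.2 (Nat.lt_succ_of_le (key_fst_le_succ e x.1))
    _ = _ := hg

variable (D) in
def node (p : ℕ × ℕ) (hp : p.1 ≤ m) (hp' : p.2 < 2 ^ p.1) : ↥(treeSet ∪ D) :=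
  ⟨.tree 0 ⟨p.1, Nat.lt_succ_of_le hp⟩ ⟨p.2, hp'⟩, .inl ⟨_, _, rfl⟩⟩

lemma adj_node_child {p : ℕ × ℕ} (hp : p.1 + 1 ≤ m) (hp' : p.2 < 2 ^ p.1) {b : ℕ}
    (hb : b < 2) :
    ((gadget G e).induce (treeSet ∪ D)).Adj (node D p (by omega) hp')
      (node D (p.1 + 1, 2 * p.2 + b) hp (lt_two_pow_child hp' hb)) := by
  rw [SimpleGraph.induce_adj, gadget, SimpleGraph.fromRel_adj]
  refine ⟨fun h => ?_, .inl ⟨rfl, rfl, by simp; omega⟩⟩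
  have := congrArg (fun x => (key e x).1) h
  simp [node, key] at this

lemma adj_pendant_node {d : ↥(treeSet ∪ D)} {v : V}
    (hv : d.1 = .copy v 0 ∨ d.1 = .guard v 0) :
    ((gadget G e).induce (treeSet ∪ D)).Adj d (node D (m, e v) le_rfl (e v).isLt) := by
  rw [SimpleGraph.induce_adj, gadget, SimpleGraph.fromRel_adj]
  rcases hv with hv | hv <;> rw [hv] <;> exact ⟨by simp [node], .inl ⟨rfl, rfl, rfl⟩⟩

variable (D) in
def subtree (p : ℕ × ℕ) : Set ↥(treeSet ∪ D) :=
  {x | (key e x.1).1 ≤ m ∧ Anc p (key e x.1)}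

lemma node_mem_subtree {p : ℕ × ℕ} (hp : p.1 ≤ m) (hp' : p.2 < 2 ^ p.1) :
    node D p hp hp' ∈ subtree e D p :=
  ⟨hp, anc_refl p⟩

lemma subtree_subset_subtree {p q : ℕ × ℕ} (h : Anc p q) : subtree e D q ⊆ subtree e D p :=
  fun _ hx => ⟨hx.1, h.trans hx.2⟩

lemma le_gadgetW_of_mem_subtree (β : ℕ) {p : ℕ × ℕ} {x : ↥(treeSet ∪ D)}
    (hx : x ∈ subtree e D p) : β + 3 * p.1 ≤ gadgetW β x.1 := by
  rw [gadgetW_of_key_fst_le e β hx.1]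
  have := hx.2.1
  omega

include hD hind

lemma eq_node_of_key {x : ↥(treeSet ∪ D)} {p : ℕ × ℕ} (hp : p.1 ≤ m) (hp' : p.2 < 2 ^ p.1)
    (h : key e x.1 = p) : x = node D p hp hp' :=
  key_injective e G hD hind h

lemma subtree_eq_singleton {p : ℕ × ℕ} (hp : p.1 = m) (hp' : p.2 < 2 ^ p.1) :
    subtree e D p = {node D p hp.le hp'} := by
  ext x
  refine ⟨fun hx => eq_node_of_key e G hD hind _ _ (hx.2.eq_of_fst_eq ?_).symm, ?_⟩
  · exact le_antisymm hx.2.1 (hp ▸ hx.1)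
  · rintro rfl
    exact node_mem_subtree e _ _

lemma subtree_eq_union {p : ℕ × ℕ} (hp : p.1 + 1 ≤ m) (hp' : p.2 < 2 ^ p.1) :
    subtree e D p = ({node D p (by omega) hp'} ∪ subtree e D (p.1 + 1, 2 * p.2 + 0)) ∪
      subtree e D (p.1 + 1, 2 * p.2 + 1) := by
  ext x
  constructor
  · intro hx
    rcases eq_or_anc_child_of_anc hx.2 with h | ⟨b, hb, h⟩
    · exact .inl (.inl (eq_node_of_key e G hD hind _ _ h))
    · interval_cases b
      exacts [.inl (.inr ⟨hx.1, h⟩), .inr ⟨hx.1, h⟩]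
  · rintro ((rfl | hx) | hx)
    · exact node_mem_subtree e _ _
    · exact subtree_subset_subtree e (anc_child p two_pos) hx
    · exact subtree_subset_subtree e (anc_child p one_lt_two) hx

variable (T : TDDecomp ((gadget G e).induce (treeSet ∪ D)))

lemma hasLeast_subtree {p : ℕ × ℕ} (hp : p.1 ≤ m) (hp' : p.2 < 2 ^ p.1) :
    T.HasLeast (subtree e D p) := by
  induction hn : m - p.1 generalizing p with
  | zero => exact subtree_eq_singleton e G hD hind (by omega) hp' ▸ T.hasLeast_singleton _
  | succ n ih =>
    have hchild {b : ℕ} (hb : b < 2) : T.HasLeast (subtree e D (p.1 + 1, 2 * p.2 + b)) :=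
      ih (by simp; omega) (lt_two_pow_child hp' hb) (by simp; omega)
    rw [subtree_eq_union e G hD hind (by omega) hp']
    exact ((T.hasLeast_singleton _).union (hchild two_pos) rfl (node_mem_subtree e _ _)
      (adj_node_child e G (by omega) hp' two_pos)).union (hchild one_lt_two) (.inl rfl)
      (node_mem_subtree e _ _) (adj_node_child e G (by omega) hp' one_lt_two)

lemma hasLeast_subtree_union_pendant {d : ↥(treeSet ∪ D)} {v : V}
    (hv : d.1 = .copy v 0 ∨ d.1 = .guard v 0) {p : ℕ × ℕ}
    (hp : p.1 ≤ m) (hpd : Anc p (key e d.1)) : T.HasLeast (subtree e D p ∪ {d}) := by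
  rw [key_of_pendant e hv] at hpd
  have hleaf : Anc p (m, e v) := anc_of_anc_of_fst_le hpd (anc_parent m (by omega)) hp
  have hp' : p.2 < 2 ^ p.1 := hleaf.snd_lt_two_pow (e v).isLt
  exact (hasLeast_subtree e G hD hind T hp hp').union (T.hasLeast_singleton d)
    (subtree_subset_subtree e hleaf (node_mem_subtree (p := (m, e v)) e le_rfl (e v).isLt)) rfl
    (adj_pendant_node e G hv).symm

lemma hasHeavyChain_subtree (β : ℕ) {p : ℕ × ℕ} (hp' : p.2 < 2 ^ p.1) :
    T.HasHeavyChain (subtree e D p) (fun x => gadgetW β x.1)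
      (∑ i ∈ Finset.Ico p.1 (m + 1), (β + 3 * i)) := by
  induction hn : m + 1 - p.1 generalizing p with
  | zero =>
    rw [Finset.Ico_eq_empty_of_le (by omega), Finset.sum_empty]
    exact TDDecomp.hasHeavyChain_zero _ _
  | succ n ih =>
    obtain ⟨x, hx, hleast⟩ := hasLeast_subtree e G hD hind T (by omega) hp'
    obtain ⟨b, hb, hxb⟩ := exists_child_not_anc p (key e x.1)
    rw [Finset.sum_eq_sum_Ico_succ_bot (by omega)]
    exact ((ih (lt_two_pow_child hp' hb) (by simp; omega)).insert_least hx hleast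
      (subtree_subset_subtree e (anc_child p hb)) fun h => hxb h.2).mono le_rfl
      (Nat.add_le_add_right (le_gadgetW_of_mem_subtree e β hx) _)

lemma hasHeavyChain_subtree_union_pendant (β : ℕ) {d : ↥(treeSet ∪ D)} {v : V}
    (hv : d.1 = .copy v 0 ∨ d.1 = .guard v 0) {p : ℕ × ℕ}
    (hpd : Anc p (key e d.1)) :
    T.HasHeavyChain (subtree e D p ∪ {d}) (fun x => gadgetW β x.1)
      (∑ i ∈ Finset.Ico p.1 (m + 1), (β + 3 * i) + gadgetW β d.1) := by
  have hdkey := key_of_pendant e hv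
  have hd_nmem (q : ℕ × ℕ) : d ∉ subtree e D q := fun h => by
    have := h.1
    rw [hdkey] at this
    omega
  induction hn : m + 1 - p.1 generalizing p with
  | zero =>
    have hp : m + 1 ≤ p.1 := by
      have := hpd.1
      rw [hdkey] at this
      omega
    rw [Finset.Ico_eq_empty_of_le hp, Finset.sum_empty, zero_add]
    exact ((TDDecomp.hasHeavyChain_zero ∅ _).insert_least (S := {d}) rfl
      (fun y hy => hy ▸ T.le_refl _)
      (Set.empty_subset _) (Set.notMem_empty _)).mono Set.subset_union_right le_rfl
  | succ n ih =>
    have hp : p.1 ≤ m := by omega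
    have hp' : p.2 < 2 ^ p.1 := hpd.snd_lt_two_pow (by
      rw [hdkey, pow_succ]
      have := (e v).isLt
      omega)
    have hwd := gadgetW_of_pendant β hv
    obtain ⟨x, hx, hleast⟩ := hasLeast_subtree_union_pendant e G hD hind T hv hp hpd
    rcases hx with hx | rfl
    · rw [Finset.sum_eq_sum_Ico_succ_bot (by omega), add_assoc]
      let c : ℕ × ℕ := (p.1 + 1, (key e d.1).2 / 2 ^ ((key e d.1).1 - (p.1 + 1)))
      have hcd : Anc c (key e d.1) := ⟨by simp only [c, hdkey]; omega, rfl⟩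
      have hpc : Anc p c := anc_of_anc_of_fst_le hpd hcd (by simp [c])
      by_cases hxc : x ∈ subtree e D c
      · -- `x` lies strictly below depth `p.1`, and the extra weight `3` pays for `d`
        obtain ⟨b, hb, hxb⟩ := exists_child_not_anc p (key e x.1)
        have hxw : β + 3 * (p.1 + 1) ≤ gadgetW β x.1 := le_gadgetW_of_mem_subtree e β hxc
        exact ((hasHeavyChain_subtree e G hD hind T β (lt_two_pow_child hp' hb)).insert_least
          (.inl hx) hleast ((subtree_subset_subtree e (anc_child p hb)).trans
            Set.subset_union_left) fun h => hxb h.2).mono le_rfl (by simp only at hxw ⊢; omega)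
      · refine ((ih hcd (by simp [c]; omega)).insert_least (.inl hx) hleast
          (Set.union_subset_union_left _ (subtree_subset_subtree e hpc)) ?_).mono le_rfl
          (Nat.add_le_add_right (le_gadgetW_of_mem_subtree e β hx) _)
        rintro (h | rfl)
        exacts [hxc h, hd_nmem p hx]
    · exact ((hasHeavyChain_subtree e G hD hind T β hp').insert_least (.inr rfl) hleast
        Set.subset_union_left (hd_nmem p)).mono le_rfl (add_comm _ _).le

lemma le_weightedDepth [Finite V] (β : ℕ) :
    ∑ i ∈ Finset.range (m + 1), (β + 3 * i) + sSup (gadgetW β '' D) ≤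
      T.weightedDepth (fun x => gadgetW β x.1) := by
  rw [Finset.range_eq_Ico]
  rcases D.eq_empty_or_nonempty with hD₀ | hne
  · simpa [hD₀] using
      (hasHeavyChain_subtree e G hD hind T β (p := (0, 0)) (by simp)).le_weightedDepth
  · obtain ⟨y, hyD, hy⟩ := (hne.image (gadgetW β)).csSup_mem (D.toFinite.image _)
    obtain ⟨v, hv⟩ := hD hyD
    have hroot : Anc (0, 0) (key e y) := root_anc (by
      rw [key_of_pendant e hv, pow_succ]
      have := (e v).isLt
      omega)
    rw [← hy]
    exact (hasHeavyChain_subtree_union_pendant e G hD hind T β (d := ⟨y, .inr hyD⟩) hv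
      hroot).le_weightedDepth

end Gadget

theorem stmt14_general {V : Type*} (G : SimpleGraph V) (m : ℕ)
    (e : V ≃ Fin (2 ^ m))
    (β α : ℕ)
    (hα : α = ∑ i ∈ Finset.range (m + 1), (β + 3 * i))
    (D : Set (GadgetV V m))
    (hD : D ⊆ {x | ∃ v : V, x = GadgetV.copy v 0 ∨ x = GadgetV.guard v 0})
    (hind : ∀ x ∈ D, ∀ y ∈ D, ¬ (gadget G e).Adj x y) :
    wtd (SimpleGraph.induce
        ({x | ∃ (i : Fin (m + 1)) (j : Fin (2 ^ i.val)), x = GadgetV.tree 0 i j} ∪ D)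
        (gadget G e))
      (fun x => gadgetW β x.1) = α + sSup (gadgetW β '' D) := by
  have : Finite V := .of_equiv _ e.symm
  subst hα
  exact wtd_eq_of_le (Gadget.treeOrder e G hD hind)
    (Gadget.weightedDepth_treeOrder_le e G hD hind β)
    fun T => Gadget.le_weightedDepth e G hD hind T β

/-- Let `H` be the subgraph of the gadget graph `G'` induced by
`V(T_1) ∪ D`, where the set `D` of dangling vertices consists of vertices of the form
`v_1` or `v_{g1}`. If no two dangling vertices are adjacent in `G'`, then
`wtd H = α + w*`, where `w*` is the maximum weight of a dangling vertex
(`w* = 0` when `D = ∅`). -/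
theorem stmt14 {V : Type*} [Fintype V] (G : SimpleGraph V) (m : ℕ) (hm : 1 ≤ m)
    (hcard : Fintype.card V = 2 ^ m) (e : V ≃ Fin (2 ^ m))
    (hdeg : ∀ v : V, (G.neighborSet v).ncard = 3)
    (k : ℕ) (hk1 : 1 < k) (hk2 : k < Fintype.card V - 1)
    (β α : ℕ)
    (hβ : β = 3 * Fintype.card V + k + 3)
    (hα : α = ∑ i ∈ Finset.range (m + 1), (β + 3 * i))
    (D : Set (GadgetV V m))
    (hD : D ⊆ {x | ∃ v : V, x = GadgetV.copy v 0 ∨ x = GadgetV.guard v 0})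
    (hind : ∀ x ∈ D, ∀ y ∈ D, ¬ (gadget G e).Adj x y) :
    wtd (SimpleGraph.induce
        ({x | ∃ (i : Fin (m + 1)) (j : Fin (2 ^ i.val)), x = GadgetV.tree 0 i j} ∪ D)
        (gadget G e))
      (fun x => gadgetW β x.1) = α + sSup (gadgetW β '' D) :=
  stmt14_general G m e β α hα D hD hind
end

section
/- Let G be a finite simple graph in which every vertex has degree exactly 3, with n = |V(G)| = 2^m for some m ≥ 1, let k be an integer with 1 < k < n−1, and let G' (with weights, β, α and k' as specified) be the associated gadget graph. Let H be the subgraph of G' induced by V(T_1) ∪ D, where D ⊆ {v_1 : v ∈ V(G)} ∪ {v_{g1} : v ∈ V(G)}; the vertices of D are called dangling. If some two dangling vertices are adjacent in G', then wtd(H) ≥ α + 3. -/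
/-!
In a treedepth decomposition every finite connected vertex set `X` has a least element `r`,
which can be put on top of any chain found in `X \ {r}`.
Applied recursively to the complete binary tree `T_1`, whose weights grow by `3` per level,
this gives a chain as heavy as a root-to-leaf path, `α`: remove the least vertex of a subtree
and recurse into a child subtree avoiding it.

The two adjacent dangling vertices `x`, `y` hang at leaves of `T_1` and weigh at least `3`
together, since two vertices `v_{g1}` are never adjacent. Take the least vertex `r` of
`T_1 ∪ {x, y}`. If `r` is `x` (or `y`), the other one still hangs at a leaf below it, which
recursively adds its weight. If `r` is the root of the current subtree, the child subtrees
containing the leaves of `x` and `y` form, together with `x` and `y`, the same configuration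
one level down. If `r` lies deeper, it weighs `3` more than the root it replaces.
-/

namespace TDDecomp

variable {W : Type*} {H : SimpleGraph W}

def ofLinearOrder [LinearOrder W] (H : SimpleGraph W) : TDDecomp H where
  le := (· ≤ ·)
  le_refl := _root_.le_refl
  le_antisymm _ _ := _root_.le_antisymm
  le_trans _ _ _ := _root_.le_trans
  down_linear _ y z _ _ := le_total y z
  adj_comparable u v _ := le_total u v

instance : Nonempty (TDDecomp H) :=
  ⟨@ofLinearOrder W (IsWellOrder.linearOrder WellOrderingRel) H⟩

theorem le_wtd {w : W → ℕ} {n : ℕ} (h : ∀ T : TDDecomp H, n ≤ T.weightedDepth w) :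
    n ≤ wtd H w :=
  le_csInf ⟨_, Classical.arbitrary _, rfl⟩ (by rintro _ ⟨T, rfl⟩; exact h T)

variable (T : TDDecomp H)

theorem exists_forall_le_of_connected {X : Set W} (hfin : X.Finite)
    (hX : (H.induce X).Connected) : ∃ r ∈ X, ∀ s ∈ X, T.le r s := by
  let _ : LE W := ⟨T.le⟩
  have : IsTrans W (· ≤ ·) := ⟨T.le_trans⟩
  obtain ⟨r, hrX, hmin⟩ := hfin.exists_minimal (Set.nonempty_coe_sort.1 hX.nonempty)
  -- Neighbours are comparable and the elements below a vertex form a chain, so the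
  -- up-set of a minimal element is closed under adjacency.
  have step : ∀ u v : X, (H.induce X).Adj u v → T.le r u → T.le r v := by
    intro u v huv hu
    rcases T.adj_comparable _ _ huv with h | h
    · exact T.le_trans _ _ _ hu h
    · exact (T.down_linear _ _ _ hu h).elim id (hmin v.2)
  have walk : ∀ {u v : X} (p : (H.induce X).Walk u v), T.le r u → T.le r v := by
    intro u v p
    induction p with
    | nil => exact id
    | cons huv _ ih => exact fun h => ih (step _ _ huv h)
  exact ⟨r, hrX, fun s hs => walk (hX.preconnected ⟨r, hrX⟩ ⟨s, hs⟩).some (T.le_refl r)⟩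

def HasChainIn (w : W → ℕ) (X : Set W) (n : ℕ) : Prop :=
  ∃ C : Finset W, ↑C ⊆ X ∧ T.IsChain C ∧ n ≤ ∑ c ∈ C, w c

variable {T} {w : W → ℕ} {X Y : Set W} {n n' : ℕ}

theorem hasChainIn_zero : T.HasChainIn w X 0 :=
  ⟨∅, by simp, by simp [IsChain], le_rfl⟩

theorem HasChainIn.mono (h : T.HasChainIn w X n) (hXY : X ⊆ Y) (hn : n' ≤ n) :
    T.HasChainIn w Y n' :=
  let ⟨C, hCX, hC, hw⟩ := h
  ⟨C, hCX.trans hXY, hC, hn.trans hw⟩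

theorem HasChainIn.insert_root {r : W} (h : T.HasChainIn w Y n) (hr : ∀ s ∈ X, T.le r s)
    (hrX : r ∈ X) (hYX : Y ⊆ X) (hrY : r ∉ Y) : T.HasChainIn w X (w r + n) := by
  classical
  obtain ⟨C, hCY, hC, hn⟩ := h
  refine ⟨insert r C, ?_, ?_, ?_⟩
  · simpa [Set.insert_subset_iff] using ⟨hrX, hCY.trans hYX⟩
  · intro a ha b hb
    rw [Finset.mem_insert] at ha hb
    rcases ha with rfl | ha <;> rcases hb with rfl | hb
    · exact Or.inl (T.le_refl _)
    · exact Or.inl (hr _ (hYX (hCY hb)))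
    · exact Or.inr (hr _ (hYX (hCY ha)))
    · exact hC a ha b hb
  · rw [Finset.sum_insert fun hrC => hrY (hCY hrC)]
    omega

theorem le_weightedDepth [Finite W] (h : T.HasChainIn w Set.univ n) :
    n ≤ T.weightedDepth w := by
  have := Fintype.ofFinite W
  obtain ⟨C, -, hC, hn⟩ := h
  refine hn.trans (le_csSup ⟨∑ c, w c, ?_⟩ ⟨C, hC, rfl⟩)
  rintro _ ⟨C', -, rfl⟩
  exact Finset.sum_le_sum_of_subset (Finset.subset_univ C')

end TDDecomp

theorem SimpleGraph.connected_induce_singleton {W : Type*} (H : SimpleGraph W) (v : W) :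
    (H.induce {v}).Connected := by
  rw [induce_singleton_eq_top]
  exact connected_top

def pathWeight (β m d : ℕ) : ℕ := ∑ i ∈ Finset.Icc d m, (β + 3 * i)

theorem pathWeight_eq_zero_of_lt {β m d : ℕ} (h : m < d) : pathWeight β m d = 0 := by
  simp [pathWeight, Finset.Icc_eq_empty_of_lt h]

theorem pathWeight_eq_add {β m d : ℕ} (h : d ≤ m) :
    pathWeight β m d = β + 3 * d + pathWeight β m (d + 1) := by
  rw [pathWeight, pathWeight, Finset.Icc_add_one_left_eq_Ioc]
  exact (Finset.add_sum_Ioc_eq_sum_Icc h).symm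

theorem div_two_pow_sub_succ_div_two {a b : ℕ} (h : b < a) (ℓ : ℕ) :
    ℓ / 2 ^ (a - (b + 1)) / 2 = ℓ / 2 ^ (a - b) := by
  rw [Nat.div_div_eq_div_mul, ← pow_succ, show a - (b + 1) + 1 = a - b by omega]

theorem div_two_pow_sub_lt {ℓ m : ℕ} (hℓ : ℓ < 2 ^ m) (d : ℕ) : ℓ / 2 ^ (m - d) < 2 ^ d := by
  rcases le_or_gt d m with h | h
  · rw [Nat.div_lt_iff_lt_mul (Nat.two_pow_pos _), ← pow_add, Nat.add_sub_cancel' h]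
    exact hℓ
  · rw [Nat.sub_eq_zero_of_le h.le, pow_zero, Nat.div_one]
    exact hℓ.trans (Nat.pow_lt_pow_right (by norm_num) h)

section BinaryTree

variable {W : Type*}

/-- The vertices below `node d j`, where `node i ℓ` (`i ≤ m`, `ℓ < 2 ^ i`) is the `ℓ`-th vertex
at depth `i` of a complete binary tree of height `m`, whose children are `node (i + 1) (2 * ℓ)`
and `node (i + 1) (2 * ℓ + 1)`. -/
def subtree (node : ℕ → ℕ → W) (m d j : ℕ) : Set W :=
  {v | ∃ i ℓ, d ≤ i ∧ i ≤ m ∧ ℓ < 2 ^ i ∧ ℓ / 2 ^ (i - d) = j ∧ node i ℓ = v}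

/-- The subtree at depth `d` containing the leaf `node m ℓ`, together with an extra vertex `z`. -/
def pendantSubtree (node : ℕ → ℕ → W) (m d : ℕ) (z : W) (ℓ : ℕ) : Set W :=
  insert z (subtree node m d (ℓ / 2 ^ (m - d)))

variable {node : ℕ → ℕ → W} {m d j c ℓ : ℕ} {v : W}

theorem subtree_eq_empty_of_lt (h : m < d) : subtree node m d j = ∅ := by
  ext v
  simp only [subtree, Set.mem_ofPred_eq, Set.mem_empty_iff_false, iff_false]
  omega

theorem le_of_mem_subtree (hv : v ∈ subtree node m d j) : d ≤ m :=
  let ⟨_, _, hdi, him, _⟩ := hv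
  hdi.trans him

theorem lt_of_mem_subtree (hv : v ∈ subtree node m d j) : j < 2 ^ d := by
  obtain ⟨i, ℓ, hdi, -, hℓ, rfl, -⟩ := hv
  rw [Nat.div_lt_iff_lt_mul (Nat.two_pow_pos _), ← pow_add, Nat.add_sub_cancel' hdi]
  exact hℓ

theorem node_mem_subtree (hd : d ≤ m) (hj : j < 2 ^ d) : node d j ∈ subtree node m d j :=
  ⟨d, j, le_rfl, hd, hj, by simp, rfl⟩

theorem leaf_mem_subtree (hd : d ≤ m) (hℓ : ℓ < 2 ^ m) :
    node m ℓ ∈ subtree node m d (ℓ / 2 ^ (m - d)) :=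
  ⟨m, ℓ, hd, le_rfl, hℓ, rfl, rfl⟩

theorem subtree_succ_subset : subtree node m (d + 1) c ⊆ subtree node m d (c / 2) := by
  rintro v ⟨i, ℓ, hdi, him, hℓ, rfl, rfl⟩
  exact ⟨i, ℓ, by omega, him, hℓ, (div_two_pow_sub_succ_div_two (by omega) ℓ).symm, rfl⟩

theorem subtree_succ_subset_of_leaf :
    subtree node m (d + 1) (ℓ / 2 ^ (m - (d + 1))) ⊆ subtree node m d (ℓ / 2 ^ (m - d)) := by
  rcases lt_or_ge d m with h | h
  · rw [← div_two_pow_sub_succ_div_two h]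
    exact subtree_succ_subset
  · simp [subtree_eq_empty_of_lt (Nat.lt_succ_of_le h)]

theorem subtree_eq_insert (hd : d ≤ m) (hj : j < 2 ^ d) :
    subtree node m d j =
      insert (node d j) (subtree node m (d + 1) (2 * j) ∪ subtree node m (d + 1) (2 * j + 1)) := by
  refine subset_antisymm ?_ ?_
  · rintro v ⟨i, ℓ, hdi, him, hℓ, rfl, rfl⟩
    rcases hdi.eq_or_lt with rfl | hlt
    · simp
    · have hc := div_two_pow_sub_succ_div_two hlt ℓ
      have hmem : node i ℓ ∈ subtree node m (d + 1) (ℓ / 2 ^ (i - (d + 1))) :=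
        ⟨i, ℓ, hlt, him, hℓ, rfl, rfl⟩
      have hchild : ℓ / 2 ^ (i - (d + 1)) = 2 * (ℓ / 2 ^ (i - d)) ∨
          ℓ / 2 ^ (i - (d + 1)) = 2 * (ℓ / 2 ^ (i - d)) + 1 := by omega
      rcases hchild with h | h <;> rw [h] at hmem
      exacts [Or.inr (Or.inl hmem), Or.inr (Or.inr hmem)]
  · rintro v (rfl | hv | hv)
    · exact node_mem_subtree hd hj
    · simpa using subtree_succ_subset hv
    · simpa [Nat.add_div_of_dvd_right] using subtree_succ_subset hv

end BinaryTree

section WeightedBinaryTree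

variable {W : Type*} {H : SimpleGraph W} {w : W → ℕ} {β m : ℕ} {node : ℕ → ℕ → W}

structure IsWeightedBinaryTree (H : SimpleGraph W) (w : W → ℕ) (β m : ℕ) (node : ℕ → ℕ → W) :
    Prop where
  adj : ∀ i j, i < m → j < 2 ^ (i + 1) → H.Adj (node i (j / 2)) (node (i + 1) j)
  injOn : Set.InjOn (Function.uncurry node) {p | p.1 ≤ m ∧ p.2 < 2 ^ p.1}
  weight : ∀ i j, i ≤ m → j < 2 ^ i → w (node i j) = β + 3 * i

/-- The bound `w z ≤ 3` matches what a least vertex below the root of a subtree gains over it. -/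
structure IsPendant (H : SimpleGraph W) (w : W → ℕ) (m : ℕ) (node : ℕ → ℕ → W) (z : W)
    (ℓ : ℕ) : Prop where
  lt : ℓ < 2 ^ m
  ne_node : ∀ i j, node i j ≠ z
  adj : H.Adj z (node m ℓ)
  weight_le : w z ≤ 3

theorem IsPendant.notMem_subtree {z : W} {ℓ d j : ℕ} (hz : IsPendant H w m node z ℓ) :
    z ∉ subtree node m d j :=
  fun ⟨i, ℓ', _, _, _, _, h⟩ => hz.ne_node i ℓ' h

namespace IsWeightedBinaryTree

variable (htree : IsWeightedBinaryTree H w β m node)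
include htree

theorem weight_le_of_mem_subtree {v : W} {d j : ℕ} (hv : v ∈ subtree node m d j) :
    β + 3 * d ≤ w v := by
  obtain ⟨i, ℓ, hdi, him, hℓ, -, rfl⟩ := hv
  rw [htree.weight i ℓ him hℓ]
  omega

theorem exists_child_notMem_subtree (v : W) (d j : ℕ) :
    ∃ c, c / 2 = j ∧ v ∉ subtree node m (d + 1) c := by
  by_contra! h
  obtain ⟨i, ℓ, -, him, hℓ, hc, rfl⟩ := h (2 * j) (by omega)
  obtain ⟨i', ℓ', -, him', hℓ', hc', heq⟩ := h (2 * j + 1) (by omega)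
  obtain ⟨rfl, rfl⟩ := Prod.mk.inj (@htree.injOn (i', ℓ') ⟨him', hℓ'⟩ (i, ℓ) ⟨him, hℓ⟩ heq)
  omega

theorem connected_induce_subtree {d j : ℕ} (hd : d ≤ m) (hj : j < 2 ^ d) :
    (H.induce (subtree node m d j)).Connected := by
  rcases hd.lt_or_eq with hd' | rfl
  · replace hd' : d + 1 ≤ m := hd'
    have hadj : ∀ c, c / 2 = j → H.Adj (node d j) (node (d + 1) c) := fun c hc =>
      hc ▸ htree.adj d c hd' (by rw [pow_succ]; omega)
    have hj₀ : 2 * j < 2 ^ (d + 1) := by rw [pow_succ]; omega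
    have hj₁ : 2 * j + 1 < 2 ^ (d + 1) := by rw [pow_succ]; omega
    rw [subtree_eq_insert hd hj, Set.insert_eq, ← Set.union_assoc]
    have hleft := SimpleGraph.connected_induce_union
      (H.connected_induce_singleton _).preconnected
      (connected_induce_subtree hd' hj₀).preconnected rfl (node_mem_subtree hd' hj₀)
      (hadj (2 * j) (by omega))
    exact SimpleGraph.connected_induce_union hleft.preconnected
      (connected_induce_subtree hd' hj₁).preconnected (Or.inl rfl) (node_mem_subtree hd' hj₁)
      (hadj (2 * j + 1) (by omega))
  · rw [subtree_eq_insert le_rfl hj, subtree_eq_empty_of_lt (by omega),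
      subtree_eq_empty_of_lt (by omega), Set.union_empty, ← Set.singleton_def]
    exact H.connected_induce_singleton _
termination_by m - d

theorem connected_induce_pendantSubtree {z : W} {ℓ : ℕ} (hz : IsPendant H w m node z ℓ) (d : ℕ) :
    (H.induce (pendantSubtree node m d z ℓ)).Connected := by
  rcases le_or_gt d m with hd | hd
  · rw [pendantSubtree, Set.insert_eq]
    exact SimpleGraph.connected_induce_union (H.connected_induce_singleton _).preconnected
      (htree.connected_induce_subtree hd (div_two_pow_sub_lt hz.lt d)).preconnected rfl
      (leaf_mem_subtree hd hz.lt) hz.adj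
  · rw [pendantSubtree, subtree_eq_empty_of_lt hd, ← Set.singleton_def]
    exact H.connected_induce_singleton _

variable [Finite W] (T : TDDecomp H)

theorem hasChainIn_subtree (d j : ℕ) (hj : j < 2 ^ d) :
    T.HasChainIn w (subtree node m d j) (pathWeight β m d) := by
  rcases lt_or_ge m d with hd | hd
  · rw [pathWeight_eq_zero_of_lt hd]
    exact TDDecomp.hasChainIn_zero
  obtain ⟨r, hrX, hr⟩ := T.exists_forall_le_of_connected (Set.toFinite _)
    (htree.connected_induce_subtree hd hj)
  obtain ⟨c, rfl, hrc⟩ := htree.exists_child_notMem_subtree r d j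
  have hc : c < 2 ^ (d + 1) := by rw [pow_succ]; omega
  refine ((hasChainIn_subtree (d + 1) c hc).insert_root hr hrX subtree_succ_subset
    hrc).mono subset_rfl ?_
  rw [pathWeight_eq_add hd]
  have := htree.weight_le_of_mem_subtree hrX
  omega
termination_by m + 1 - d

/-- The other child subtree supplies `pathWeight β m (d + 1)` below `r`, and `r` weighs at least
`β + 3 * (d + 1)`, three more than the first term of `pathWeight β m d`. -/
theorem hasChainIn_of_root_mem_subtree_succ {X : Set W} {r : W} {d ℓ : ℕ}
    (hr : ∀ s ∈ X, T.le r s) (hrX : r ∈ X)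
    (hrc : r ∈ subtree node m (d + 1) (ℓ / 2 ^ (m - (d + 1))))
    (hX : subtree node m d (ℓ / 2 ^ (m - d)) ⊆ X) :
    T.HasChainIn w X (pathWeight β m d + 3) := by
  have hdm : d + 1 ≤ m := le_of_mem_subtree hrc
  have hc := div_two_pow_sub_succ_div_two hdm ℓ
  have hclt := lt_of_mem_subtree hrc
  obtain ⟨c', hc', hrc'⟩ := htree.exists_child_notMem_subtree r d (ℓ / 2 ^ (m - d))
  have hc'lt : c' < 2 ^ (d + 1) := by rw [pow_succ] at hclt ⊢; omega
  have hsub : subtree node m (d + 1) c' ⊆ X := subtree_succ_subset.trans (by rwa [hc'])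
  refine ((htree.hasChainIn_subtree T (d + 1) c' hc'lt).insert_root hr hrX hsub hrc').mono
    subset_rfl ?_
  rw [pathWeight_eq_add (by omega)]
  have := htree.weight_le_of_mem_subtree hrc
  omega

theorem hasChainIn_pendantSubtree {z : W} {ℓ : ℕ} (hz : IsPendant H w m node z ℓ) (d : ℕ) :
    T.HasChainIn w (pendantSubtree node m d z ℓ) (pathWeight β m d + w z) := by
  obtain ⟨r, hrX, hr⟩ := T.exists_forall_le_of_connected (Set.toFinite _)
    (htree.connected_induce_pendantSubtree hz d)
  rcases hrX with rfl | hrS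
  · rw [add_comm]
    exact (htree.hasChainIn_subtree T d _ (div_two_pow_sub_lt hz.lt d)).insert_root hr
      (Set.mem_insert _ _) (Set.subset_insert _ _) hz.notMem_subtree
  have hdm := le_of_mem_subtree hrS
  by_cases hrc : r ∈ subtree node m (d + 1) (ℓ / 2 ^ (m - (d + 1)))
  · exact (htree.hasChainIn_of_root_mem_subtree_succ T hr (Or.inr hrS) hrc
      (Set.subset_insert _ _)).mono subset_rfl (by have := hz.weight_le; omega)
  refine ((hasChainIn_pendantSubtree hz (d + 1)).insert_root hr (Or.inr hrS)
    (Set.insert_subset_insert subtree_succ_subset_of_leaf) ?_).mono subset_rfl ?_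
  · rintro (rfl | h)
    exacts [hz.notMem_subtree hrS, hrc h]
  · rw [pathWeight_eq_add hdm]
    have := htree.weight_le_of_mem_subtree hrS
    omega
termination_by m + 1 - d

theorem hasChainIn_pendantSubtree_union {x y : W} {ℓx ℓy : ℕ}
    (hx : IsPendant H w m node x ℓx) (hy : IsPendant H w m node y ℓy) (hxy : H.Adj x y)
    (hw : 3 ≤ w x + w y) (d : ℕ) :
    T.HasChainIn w (pendantSubtree node m d x ℓx ∪ pendantSubtree node m d y ℓy)
      (pathWeight β m d + 3) := by
  obtain ⟨r, hrX, hr⟩ := T.exists_forall_le_of_connected (Set.toFinite _)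
    (SimpleGraph.connected_induce_union (htree.connected_induce_pendantSubtree hx d).preconnected
      (htree.connected_induce_pendantSubtree hy d).preconnected (Set.mem_insert _ _)
      (Set.mem_insert _ _) hxy)
  by_cases hrx : r = x
  · subst hrx
    refine ((htree.hasChainIn_pendantSubtree T hy d).insert_root hr hrX Set.subset_union_right
      ?_).mono subset_rfl (by omega)
    rintro (h | h)
    exacts [hxy.ne h, hx.notMem_subtree h]
  by_cases hry : r = y
  · subst hry
    refine ((htree.hasChainIn_pendantSubtree T hx d).insert_root hr hrX Set.subset_union_left
      ?_).mono subset_rfl (by omega)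
    rintro (h | h)
    exacts [hxy.ne h.symm, hy.notMem_subtree h]
  have hrS : r ∈ subtree node m d (ℓx / 2 ^ (m - d)) ∪ subtree node m d (ℓy / 2 ^ (m - d)) := by
    rcases hrX with (h | h) | (h | h)
    exacts [absurd h hrx, Or.inl h, absurd h hry, Or.inr h]
  have hdm : d ≤ m := hrS.elim le_of_mem_subtree le_of_mem_subtree
  have hwr : β + 3 * d ≤ w r :=
    hrS.elim htree.weight_le_of_mem_subtree htree.weight_le_of_mem_subtree
  by_cases hcx : r ∈ subtree node m (d + 1) (ℓx / 2 ^ (m - (d + 1)))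
  · exact htree.hasChainIn_of_root_mem_subtree_succ T hr hrX hcx
      ((Set.subset_insert _ _).trans Set.subset_union_left)
  by_cases hcy : r ∈ subtree node m (d + 1) (ℓy / 2 ^ (m - (d + 1)))
  · exact htree.hasChainIn_of_root_mem_subtree_succ T hr hrX hcy
      ((Set.subset_insert _ _).trans Set.subset_union_right)
  refine ((hasChainIn_pendantSubtree_union hx hy hxy hw (d + 1)).insert_root hr hrX
    (Set.union_subset_union (Set.insert_subset_insert subtree_succ_subset_of_leaf)
      (Set.insert_subset_insert subtree_succ_subset_of_leaf)) ?_).mono subset_rfl ?_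
  · rintro ((h | h) | (h | h))
    exacts [hrx h, hcx h, hry h, hcy h]
  · rw [pathWeight_eq_add hdm]
    omega
termination_by m + 1 - d

end IsWeightedBinaryTree

end WeightedBinaryTree

instance {V : Type*} {m : ℕ} [Finite V] : Finite (GadgetV V m) :=
  Finite.of_surjective
    (fun x : (V × Fin 2) ⊕ (V × Fin 3) ⊕ (Fin 3 × Σ i : Fin (m + 1), Fin (2 ^ i.val)) =>
      match x with
      | .inl (v, i) => .copy v i
      | .inr (.inl (v, i)) => .guard v i
      | .inr (.inr (t, ⟨i, j⟩)) => .tree t i j)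
    (by
      rintro (⟨v, i⟩ | ⟨v, i⟩ | ⟨t, i, j⟩)
      exacts [⟨.inl (v, i), rfl⟩, ⟨.inr (.inl (v, i)), rfl⟩, ⟨.inr (.inr (t, ⟨i, j⟩)), rfl⟩])

section Gadget

variable {V : Type*} {m : ℕ} {S : Set (GadgetV V m)}

/-- The `j`-th vertex at depth `i` of `T_1`, as a vertex of `G'[S]` (a junk vertex unless `i ≤ m`
and `j < 2 ^ i`). -/
def firstTreeNode (hS : ∀ i j, GadgetV.tree 0 i j ∈ S) (i j : ℕ) : S :=
  if h : i ≤ m ∧ j < 2 ^ i then ⟨.tree 0 ⟨i, Nat.lt_succ_of_le h.1⟩ ⟨j, h.2⟩, hS _ _⟩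
  else ⟨.tree 0 0 ⟨0, Nat.two_pow_pos _⟩, hS _ _⟩

variable (hS : ∀ i j, GadgetV.tree 0 i j ∈ S)

theorem firstTreeNode_of_lt {i j : ℕ} (hi : i ≤ m) (hj : j < 2 ^ i) :
    (firstTreeNode hS i j).1 = .tree 0 ⟨i, Nat.lt_succ_of_le hi⟩ ⟨j, hj⟩ := by
  simp [firstTreeNode, hi, hj]

theorem isWeightedBinaryTree_firstTreeNode (G : SimpleGraph V) (e : V ≃ Fin (2 ^ m)) (β : ℕ) :
    IsWeightedBinaryTree ((gadget G e).induce S) (fun x => gadgetW β x.1) β m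
      (firstTreeNode hS) where
  adj i j hi hj := by
    have hj2 : j / 2 < 2 ^ i := by rw [pow_succ] at hj; omega
    simp [firstTreeNode_of_lt hS hi.le hj2, firstTreeNode_of_lt hS hi hj, gadget, gadgetRel]
  injOn := by
    rintro ⟨i, j⟩ ⟨hi, hj⟩ ⟨i', j'⟩ ⟨hi', hj'⟩ h
    simp only [Function.uncurry_apply_pair, Subtype.ext_iff, firstTreeNode_of_lt hS hi hj,
      firstTreeNode_of_lt hS hi' hj', GadgetV.tree.injEq, Fin.mk.injEq, true_and] at h
    obtain ⟨rfl, h⟩ := h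
    simpa using h
  weight i j hi hj := by simp [firstTreeNode_of_lt hS hi hj, gadgetW]

theorem isPendant_firstTreeNode (G : SimpleGraph V) (e : V ≃ Fin (2 ^ m)) (β : ℕ) {x : S} {u : V}
    (hx : x.1 = .copy u 0 ∨ x.1 = .guard u 0) :
    IsPendant ((gadget G e).induce S) (fun x => gadgetW β x.1) m (firstTreeNode hS) x (e u) where
  lt := (e u).isLt
  ne_node i j h := by
    rw [← h] at hx
    unfold firstTreeNode at hx
    split_ifs at hx <;> simp at hx
  adj := by
    rcases hx with h | h <;>
    simp [firstTreeNode_of_lt hS le_rfl (e u).isLt, gadget, gadgetRel, h]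
  weight_le := by rcases hx with h | h <;> simp [h, gadgetW]

theorem three_le_gadgetW_add {G : SimpleGraph V} {e : V ≃ Fin (2 ^ m)} (β : ℕ) {x y : GadgetV V m}
    {u v : V} (hx : x = .copy u 0 ∨ x = .guard u 0) (hy : y = .copy v 0 ∨ y = .guard v 0)
    (hxy : (gadget G e).Adj x y) : 3 ≤ gadgetW β x + gadgetW β y := by
  rcases hx with rfl | rfl <;> rcases hy with rfl | rfl <;> simp_all [gadgetW, gadget, gadgetRel]

end Gadget

theorem sum_range_eq_pathWeight (β m : ℕ) :
    ∑ i ∈ Finset.range (m + 1), (β + 3 * i) = pathWeight β m 0 := by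
  rw [pathWeight, Finset.range_eq_Ico, Finset.Ico_add_one_right_eq_Icc]

theorem stmt15_general {V : Type*} [Fintype V] (G : SimpleGraph V) (m : ℕ) (e : V ≃ Fin (2 ^ m))
    (β α : ℕ)
    (hα : α = ∑ i ∈ Finset.range (m + 1), (β + 3 * i))
    (D : Set (GadgetV V m))
    (hD : D ⊆ {x | ∃ v : V, x = GadgetV.copy v 0 ∨ x = GadgetV.guard v 0})
    (hedge : ∃ x ∈ D, ∃ y ∈ D, (gadget G e).Adj x y) :
    α + 3 ≤ wtd (SimpleGraph.induce
        ({x | ∃ (i : Fin (m + 1)) (j : Fin (2 ^ i.val)), x = GadgetV.tree 0 i j} ∪ D)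
        (gadget G e))
      (fun x => gadgetW β x.1) := by
  have hS : ∀ i j, GadgetV.tree 0 i j ∈
      {x | ∃ (i : Fin (m + 1)) (j : Fin (2 ^ i.val)), x = GadgetV.tree 0 i j} ∪ D :=
    fun i j => Or.inl ⟨i, j, rfl⟩
  obtain ⟨x, hxD, y, hyD, hxy⟩ := hedge
  obtain ⟨u, hu⟩ := hD hxD
  obtain ⟨v, hv⟩ := hD hyD
  refine TDDecomp.le_wtd fun T => T.le_weightedDepth ?_
  have hchain := (isWeightedBinaryTree_firstTreeNode hS G e β).hasChainIn_pendantSubtree_union T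
    (isPendant_firstTreeNode hS G e β (x := ⟨x, Or.inr hxD⟩) hu)
    (isPendant_firstTreeNode hS G e β (x := ⟨y, Or.inr hyD⟩) hv) hxy
    (three_le_gadgetW_add β hu hv hxy) 0
  rw [hα, sum_range_eq_pathWeight]
  exact hchain.mono (Set.subset_univ _) le_rfl

/-- Let `H` be the subgraph of the gadget graph `G'` induced by
`V(T_1) ∪ D`, where the set `D` of dangling vertices consists of vertices of the form
`v_1` or `v_{g1}`. If some two dangling vertices are adjacent in `G'`, then
`wtd H ≥ α + 3`. -/
theorem stmt15 {V : Type*} [Fintype V] (G : SimpleGraph V) (m : ℕ) (hm : 1 ≤ m)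
    (hcard : Fintype.card V = 2 ^ m) (e : V ≃ Fin (2 ^ m))
    (hdeg : ∀ v : V, (G.neighborSet v).ncard = 3)
    (k : ℕ) (hk1 : 1 < k) (hk2 : k < Fintype.card V - 1)
    (β α : ℕ)
    (hβ : β = 3 * Fintype.card V + k + 3)
    (hα : α = ∑ i ∈ Finset.range (m + 1), (β + 3 * i))
    (D : Set (GadgetV V m))
    (hD : D ⊆ {x | ∃ v : V, x = GadgetV.copy v 0 ∨ x = GadgetV.guard v 0})
    (hedge : ∃ x ∈ D, ∃ y ∈ D, (gadget G e).Adj x y) :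
    α + 3 ≤ wtd (SimpleGraph.induce
        ({x | ∃ (i : Fin (m + 1)) (j : Fin (2 ^ i.val)), x = GadgetV.tree 0 i j} ∪ D)
        (gadget G e))
      (fun x => gadgetW β x.1) :=
  stmt15_general G m e β α hα D hD hedge
end
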